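/- arXiv:0804.4512 — 3 statements merged into one kernel-verified Lean document; each statement's English description precedes it below -/
import Mathlib

section
/- Decomposition of the GGT matrix into elementary reflections (Theorem 2.12): for every n ≥ 1 and all Verblunsky coefficients α_0,…,α_{n−1} ∈ ℂ with |α_k| < 1 for 0 ≤ k ≤ n−2 and |α_{n−1}| = 1, one has the matrix identity G(α_0,…,α_{n−1}) = Ξ^{(0)}(γ_0) · Ξ^{(1)}(γ_1) ⋯ Ξ^{(n−1)}(γ_{n−1}), where γ_0,…,γ_{n−1} are the deformed Verblunsky coefficients associated with α_0,…,α_{n−1}. -/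
/-!
Right multiplication by `Ξ⁽ᵐ⁾(γ)` only recombines columns `m` and `m + 1`, so the partial products
`Ξ⁽⁰⁾(γ₀) ⋯ Ξ⁽ᵐ⁻¹⁾(γ_{m-1})` have an explicit closed form, obtained by induction on `m`. For
`m = n` it is a Hessenberg matrix whose entries are products of the `γ_k`, `ρ(γ_k)` and phases
`e^{iφ_k}`. The phases are unimodular, so `|γ_k| = |α_k|` and `conj α_k = γ_k ∏_{p<k} e^{iφ_p}`;
substituting, the phases telescope and the entries become those of `G(α₀, …, α_{n-1})`.
-/

open MeasureTheory Complex Finset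
open scoped Real ComplexConjugate

noncomputable section

/-- `ρ = sqrt(1 - |a|²)`. -/
def rho (a : ℂ) : ℝ := Real.sqrt (1 - ‖a‖ ^ 2)

/-- The GGT (Hessenberg) matrix associated with Verblunsky coefficients
`α 0, …, α (n-1)`, with the convention `α (-1) = -1`. -/
def GGT (n : ℕ) (α : ℕ → ℂ) : Matrix (Fin n) (Fin n) ℂ :=
  Matrix.of fun i j =>
    if (i : ℕ) ≤ (j : ℕ) then
      -(if (i : ℕ) = 0 then (-1 : ℂ) else α ((i : ℕ) - 1)) * (starRingEnd ℂ) (α (j : ℕ)) *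
        ∏ p ∈ Finset.Ico (i : ℕ) (j : ℕ), (rho (α p) : ℂ)
    else if (i : ℕ) = (j : ℕ) + 1 then (rho (α (j : ℕ)) : ℂ)
    else 0

/-- The elementary reflection matrix `Ξ^{(k)}(γ) = Id_k ⊕ Ξ(γ) ⊕ Id_{n-k-2}` where
`Ξ(γ) = [[γ, ρ e^{iφ}], [ρ, -conj(γ) e^{iφ}]]`, `ρ = sqrt(1-|γ|²)`,
`e^{iφ} = (1-γ)/(1-conj γ)`.  For `k = n-1` only the `(k,k)` entry `γ` remains,
so this also encodes `Ξ^{(n-1)}(γ) = Id_{n-1} ⊕ (γ)`. -/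
def XiMat (n k : ℕ) (γ : ℂ) : Matrix (Fin n) (Fin n) ℂ :=
  Matrix.of fun i j =>
    if (i : ℕ) = k ∧ (j : ℕ) = k then γ
    else if (i : ℕ) = k ∧ (j : ℕ) = k + 1 then
      (rho γ : ℂ) * ((1 - γ) / (1 - (starRingEnd ℂ) γ))
    else if (i : ℕ) = k + 1 ∧ (j : ℕ) = k then (rho γ : ℂ)
    else if (i : ℕ) = k + 1 ∧ (j : ℕ) = k + 1 then
      -(starRingEnd ℂ) γ * ((1 - γ) / (1 - (starRingEnd ℂ) γ))
    else if i = j then 1 else 0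

/-- The factor `e^{iφ}` of `Ξ(z)`. -/
def phase (z : ℂ) : ℂ := (1 - z) / (1 - conj z)

section XiMatColumns

variable {n k : ℕ} {γ : ℂ} (A : Matrix (Fin n) (Fin n) ℂ) {i j : Fin n}

lemma mul_XiMat_apply_of_ne (hk : (j : ℕ) ≠ k) (hk' : (j : ℕ) ≠ k + 1) :
    (A * XiMat n k γ) i j = A i j := by
  simp [Matrix.mul_apply, XiMat, hk, hk']

lemma mul_XiMat_apply_left (hj : (j : ℕ) = k) (hk : k + 1 < n) :
    (A * XiMat n k γ) i j = A i j * γ + A i ⟨k + 1, hk⟩ * rho γ := by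
  rw [Matrix.mul_apply, Fintype.sum_eq_add j ⟨k + 1, hk⟩ (by simp [Fin.ext_iff, hj])]
  · simp [XiMat, hj]
  · rintro l ⟨hl, hl'⟩
    simp_all [XiMat, Fin.ext_iff]

lemma mul_XiMat_apply_last (hj : (j : ℕ) = k) (hk : k + 1 = n) :
    (A * XiMat n k γ) i j = A i j * γ := by
  rw [Matrix.mul_apply, Fintype.sum_eq_single j]
  · simp [XiMat, hj]
  · intro l hl
    have : (l : ℕ) ≠ k + 1 := by omega
    simp_all [XiMat, Fin.ext_iff]

lemma mul_XiMat_apply_right (hj : (j : ℕ) = k + 1) :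
    (A * XiMat n k γ) i j =
      A i ⟨k, by omega⟩ * (rho γ * phase γ) - A i j * (conj γ * phase γ) := by
  rw [Matrix.mul_apply, Fintype.sum_eq_add ⟨k, by omega⟩ j (by simp [Fin.ext_iff, hj])]
  · simp [XiMat, hj, phase, sub_eq_add_neg]
  · rintro l ⟨hl, hl'⟩
    simp_all [XiMat, Fin.ext_iff]

end XiMatColumns

def tailCoeff (γ : ℕ → ℂ) (i j : ℕ) : ℂ :=
  (if i = 0 then 1 else -conj (γ (i - 1)) * phase (γ (i - 1))) *
    ∏ p ∈ Ico i j, rho (γ p) * phase (γ p)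

lemma tailCoeff_succ_right (γ : ℕ → ℂ) {i m : ℕ} (h : i ≤ m) :
    tailCoeff γ i (m + 1) = tailCoeff γ i m * (rho (γ m) * phase (γ m)) := by
  rw [tailCoeff, tailCoeff, prod_Ico_succ_top h, mul_assoc]

lemma tailCoeff_self (γ : ℕ → ℂ) (m : ℕ) :
    tailCoeff γ (m + 1) (m + 1) = -conj (γ m) * phase (γ m) := by
  simp [tailCoeff]

/-- Closed form of `Ξ⁽⁰⁾(γ₀) ⋯ Ξ⁽ᵐ⁻¹⁾(γ_{m-1})`: the columns `j < m` already have their final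
Hessenberg shape, column `m` carries the running products `tailCoeff γ i m`, and the columns
`j > m` are still those of the identity. -/
def reflPartialProd (n : ℕ) (γ : ℕ → ℂ) (m : ℕ) : Matrix (Fin n) (Fin n) ℂ :=
  Matrix.of fun i j =>
    if (j : ℕ) < m then
      if (i : ℕ) ≤ j then tailCoeff γ i j * γ j
      else if (i : ℕ) = j + 1 then rho (γ j) else 0
    else if (j : ℕ) = m then if (i : ℕ) ≤ m then tailCoeff γ i m else 0
    else if i = j then 1 else 0

section reflPartialProd

variable {n m : ℕ} {γ : ℕ → ℂ} {i j : Fin n}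

lemma reflPartialProd_apply_of_lt (h : (j : ℕ) < m) :
    reflPartialProd n γ m i j = if (i : ℕ) ≤ j then tailCoeff γ i j * γ j
      else if (i : ℕ) = j + 1 then rho (γ j) else 0 := by
  simp [reflPartialProd, h]

lemma reflPartialProd_apply_of_eq (h : (j : ℕ) = m) :
    reflPartialProd n γ m i j = if (i : ℕ) ≤ m then tailCoeff γ i m else 0 := by
  simp [reflPartialProd, h]

lemma reflPartialProd_apply_of_gt (h : m < j) :
    reflPartialProd n γ m i j = if i = j then 1 else 0 := by
  simp [reflPartialProd, h.not_gt, h.ne']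

end reflPartialProd

lemma reflPartialProd_zero (n : ℕ) (γ : ℕ → ℂ) : reflPartialProd n γ 0 = 1 := by
  ext i j
  rcases (j : ℕ).eq_zero_or_pos with hj | hj
  · rw [reflPartialProd_apply_of_eq hj, Matrix.one_apply]
    by_cases hi : (i : ℕ) = 0
    · simp [hi, tailCoeff, Fin.ext_iff, hj]
    · simp [hi, Fin.ext_iff, hj]
  · rw [reflPartialProd_apply_of_gt hj, Matrix.one_apply]

lemma reflPartialProd_mul_XiMat (γ : ℕ → ℂ) {n m : ℕ} (hm : m < n) :
    reflPartialProd n γ m * XiMat n m (γ m) = reflPartialProd n γ (m + 1) := by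
  ext i j
  rcases lt_trichotomy (j : ℕ) m with hj | hj | hj
  · rw [mul_XiMat_apply_of_ne _ hj.ne (by omega), reflPartialProd_apply_of_lt hj,
      reflPartialProd_apply_of_lt (by omega)]
  · rcases (Nat.succ_le_of_lt hm).lt_or_eq with hm' | hm'
    · rw [mul_XiMat_apply_left _ hj hm', reflPartialProd_apply_of_eq hj,
        reflPartialProd_apply_of_gt (by simp), reflPartialProd_apply_of_lt (by omega), hj]
      by_cases hi : (i : ℕ) ≤ m
      · simp [hi, Fin.ext_iff, show (i : ℕ) ≠ m + 1 by omega]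
      · by_cases hi' : (i : ℕ) = m + 1 <;> simp [hi, hi', Fin.ext_iff]
    · rw [mul_XiMat_apply_last _ hj hm', reflPartialProd_apply_of_eq hj,
        reflPartialProd_apply_of_lt (by omega), hj, if_pos (by omega : (i : ℕ) ≤ m),
        if_pos (by omega)]
  rcases (Nat.succ_le_of_lt hj).lt_or_eq with hj' | hj'
  · rw [mul_XiMat_apply_of_ne _ hj.ne' hj'.ne', reflPartialProd_apply_of_gt hj,
      reflPartialProd_apply_of_gt hj']
  · rw [mul_XiMat_apply_right _ hj'.symm, reflPartialProd_apply_of_eq (m := m) rfl,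
      reflPartialProd_apply_of_gt hj, reflPartialProd_apply_of_eq hj'.symm]
    rcases lt_trichotomy (i : ℕ) (m + 1) with hi | hi | hi
    · simp [Nat.le_of_lt_succ hi, hi.le, tailCoeff_succ_right γ (Nat.le_of_lt_succ hi),
        Fin.ext_iff, ← hj', hi.ne]
    · simp [hi, Fin.ext_iff, ← hj', tailCoeff_self]
    · simp [hi.not_ge, show ¬ (i : ℕ) ≤ m by omega, Fin.ext_iff, ← hj', hi.ne']

lemma prod_XiMat_eq_reflPartialProd (γ : ℕ → ℂ) {n m : ℕ} (hm : m ≤ n) :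
    ((List.range m).map fun k => XiMat n k (γ k)).prod = reflPartialProd n γ m := by
  induction m with
  | zero => simp [reflPartialProd_zero]
  | succ m ih =>
    rw [List.range_succ, List.map_append, List.prod_append, ih (by omega), List.map_singleton,
      List.prod_singleton, reflPartialProd_mul_XiMat γ hm]

lemma inv_phase (z : ℂ) : (phase z)⁻¹ = (1 - conj z) / (1 - z) := inv_div _ _

lemma norm_phase {z : ℂ} (hz : z ≠ 1) : ‖phase z‖ = 1 := by
  have hz' : ‖1 - z‖ ≠ 0 := norm_ne_zero_iff.mpr (sub_ne_zero.mpr hz.symm)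
  rw [phase, norm_div, show (1 : ℂ) - conj z = conj (1 - z) by simp, Complex.norm_conj,
    div_self hz']

lemma phase_ne_zero {z : ℂ} (hz : z ≠ 1) : phase z ≠ 0 :=
  norm_ne_zero_iff.mp (by rw [norm_phase hz]; exact one_ne_zero)

lemma ne_one_of_norm_lt_one {z : ℂ} (hz : ‖z‖ < 1) : z ≠ 1 := by
  rintro rfl
  simp at hz

def IsDeformedVerblunsky (n : ℕ) (α γ : ℕ → ℂ) : Prop :=
  ∀ k < n, γ k = conj (α k) * ∏ j ∈ range k, (1 - conj (γ j)) / (1 - γ j)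

section DeformedVerblunsky

variable {n : ℕ} {α γ : ℕ → ℂ}

lemma norm_deformed_eq (hα : ∀ k, k + 1 < n → ‖α k‖ < 1)
    (hγ : IsDeformedVerblunsky n α γ) : ∀ k < n, ‖γ k‖ = ‖α k‖ := by
  intro k
  induction k using Nat.strong_induction_on with
  | _ k ih =>
    intro hk
    rw [hγ k hk, norm_mul, Complex.norm_conj, norm_prod, prod_eq_one, mul_one]
    intro j hj
    have hjk := mem_range.mp hj
    have hγj : γ j ≠ 1 :=
      ne_one_of_norm_lt_one (by rw [ih j hjk (by omega)]; exact hα j (by omega))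
    rw [← inv_phase, norm_inv, norm_phase hγj, inv_one]

lemma deformed_ne_one (hα : ∀ k, k + 1 < n → ‖α k‖ < 1)
    (hγ : IsDeformedVerblunsky n α γ) {k : ℕ} (hk : k + 1 < n) : γ k ≠ 1 :=
  ne_one_of_norm_lt_one (by rw [norm_deformed_eq hα hγ k (by omega)]; exact hα k hk)

lemma rho_deformed_eq (hα : ∀ k, k + 1 < n → ‖α k‖ < 1)
    (hγ : IsDeformedVerblunsky n α γ) {k : ℕ} (hk : k < n) : rho (γ k) = rho (α k) := by
  rw [rho, rho, norm_deformed_eq hα hγ k hk]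

lemma conj_eq_deformed_mul_prod_phase (hα : ∀ k, k + 1 < n → ‖α k‖ < 1)
    (hγ : IsDeformedVerblunsky n α γ) {k : ℕ} (hk : k < n) :
    conj (α k) = γ k * ∏ p ∈ range k, phase (γ p) := by
  rw [hγ k hk, mul_assoc, ← prod_mul_distrib, prod_eq_one, mul_one]
  intro p hp
  have hpk := mem_range.mp hp
  rw [← inv_phase, inv_mul_cancel₀ (phase_ne_zero (deformed_ne_one hα hγ (by omega)))]

lemma GGT_coeff_eq_deformed (hα : ∀ k, k + 1 < n → ‖α k‖ < 1)
    (hγ : IsDeformedVerblunsky n α γ) {i j : ℕ} (hij : i ≤ j) (hj : j < n) :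
    -(if i = 0 then -1 else α (i - 1)) * conj (α j) =
      (if i = 0 then 1 else -conj (γ (i - 1)) * phase (γ (i - 1))) *
        (∏ p ∈ Ico i j, phase (γ p)) * γ j := by
  rw [conj_eq_deformed_mul_prod_phase hα hγ hj]
  rcases i with _ | i
  · simp only [if_true, range_eq_Ico]
    ring
  set u := ∏ p ∈ range i, phase (γ p)
  have hαi : α i = conj (γ i) * conj u := by
    rw [← map_mul, ← conj_eq_deformed_mul_prod_phase hα hγ (by omega), Complex.conj_conj]
  have hsplit : ∏ p ∈ range j, phase (γ p) =
      u * (phase (γ i) * ∏ p ∈ Ico (i + 1) j, phase (γ p)) := by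
    rw [← prod_range_mul_prod_Ico _ (by omega : i ≤ j), prod_eq_prod_Ico_succ_bot (by omega)]
  -- the phases `e^{iφ_p}`, `p < i`, cancel against their conjugates
  have hu : conj u * u = 1 := by
    rw [Complex.conj_mul', norm_prod, prod_eq_one, Complex.ofReal_one, one_pow]
    intro p hp
    exact norm_phase (deformed_ne_one hα hγ (by have := mem_range.mp hp; omega))
  simp only [Nat.add_sub_cancel, Nat.add_one_ne_zero, if_false, hαi, hsplit]
  linear_combination (-conj (γ i) * γ j * phase (γ i) * ∏ p ∈ Ico (i + 1) j, phase (γ p)) * hu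

lemma GGT_eq_reflPartialProd (hα : ∀ k, k + 1 < n → ‖α k‖ < 1)
    (hγ : IsDeformedVerblunsky n α γ) :
    GGT n α = reflPartialProd n γ n := by
  ext i j
  rw [reflPartialProd_apply_of_lt j.isLt]
  simp only [GGT, Matrix.of_apply]
  by_cases hij : (i : ℕ) ≤ j
  · have hrho : ∏ p ∈ Ico (i : ℕ) j, (rho (α p) : ℂ) = ∏ p ∈ Ico (i : ℕ) j, (rho (γ p) : ℂ) :=
      prod_congr rfl fun p hp => by
        rw [rho_deformed_eq hα hγ (by have := (mem_Ico.mp hp).2; omega)]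
    rw [if_pos hij, if_pos hij, GGT_coeff_eq_deformed hα hγ hij j.isLt, hrho, tailCoeff,
      prod_mul_distrib]
    ring
  · rw [if_neg hij, if_neg hij, rho_deformed_eq hα hγ j.isLt]

end DeformedVerblunsky

theorem ggt_eq_prod_reflections_general (n : ℕ) (α : ℕ → ℂ)
    (h1 : ∀ k, k + 1 < n → ‖α k‖ < 1)
    (γ : ℕ → ℂ)
    (hγ : ∀ k < n, γ k = (starRingEnd ℂ) (α k) *
      ∏ j ∈ Finset.range k, (1 - (starRingEnd ℂ) (γ j)) / (1 - γ j)) :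
    GGT n α = ((List.range n).map fun k => XiMat n k (γ k)).prod := by
  rw [prod_XiMat_eq_reflPartialProd γ le_rfl, GGT_eq_reflPartialProd h1 hγ]

/-- **Theorem 2.12** (decomposition of the GGT matrix into elementary reflections):
if `α 0, …, α (n-1)` are Verblunsky coefficients (`|α k| < 1` for `k ≤ n-2`,
`|α (n-1)| = 1`) and `γ 0, …, γ (n-1)` are the associated deformed Verblunsky
coefficients, then `G(α₀,…,α_{n-1}) = Ξ⁽⁰⁾(γ₀) ⋯ Ξ⁽ⁿ⁻¹⁾(γ_{n-1})`. -/
theorem ggt_eq_prod_reflections (n : ℕ) (hn : 1 ≤ n) (α : ℕ → ℂ)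
    (h1 : ∀ k, k + 1 < n → ‖α k‖ < 1)
    (h2 : ‖α (n - 1)‖ = 1)
    (γ : ℕ → ℂ)
    (hγ : ∀ k < n, γ k = (starRingEnd ℂ) (α k) *
      ∏ j ∈ Finset.range k, (1 - (starRingEnd ℂ) (γ j)) / (1 - γ j)) :
    GGT n α = ((List.range n).map fun k => XiMat n k (γ k)).prod :=
  ggt_eq_prod_reflections_general n α h1 γ hγ
end
end

section
/- Recursive formula for the deformed Verblunsky coefficients (Proposition 2.5(b)): Let n ≥ 1 and α_0,…,α_{n−1} ∈ ℂ with |α_k| < 1 for 0 ≤ k ≤ n−2 and |α_{n−1}| = 1, let (Φ_j) be the monic polynomials generated by the Szegő recursion, and suppose Φ_j(1) ≠ 0 for all 0 ≤ j ≤ n−1. Define γ_k = 1 − Φ_{k+1}(1)/Φ_k(1) for 0 ≤ k ≤ n−1. Then γ_0 = conj(α_0) and, for 1 ≤ k ≤ n−1, γ_k = conj(α_k)·∏_{j=0}^{k−1} (1−conj(γ_j))/(1−γ_j). -/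
/-!
Evaluating the Szegő recursion at `z = 1`, where `Φ_j^*(1) = conj Φ_j(1)`, gives
`Φ_{k+1}(1) = Φ_k(1) - conj α_k · conj Φ_k(1)`, i.e. `γ_k = conj α_k · conj Φ_k(1) / Φ_k(1)`.
Since `1 - γ_j = Φ_{j+1}(1)/Φ_j(1)`, the product `∏_{j<k} conj(1 - γ_j)/(1 - γ_j)` telescopes
to `conj Φ_k(1) / Φ_k(1)`.
-/

open MeasureTheory Complex Finset
open scoped Real ComplexConjugate

noncomputable section

/-- The monic orthogonal (Szegő) polynomials generated by the Szegő recursion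
`Φ₀ = 1`, `Φ_{j+1}(z) = z Φ_j(z) - conj(α_j) Φ_j^*(z)`, where
`Φ_j^*` is the reversed polynomial (conjugated coefficients in reverse order). -/
def szego (α : ℕ → ℂ) : ℕ → Polynomial ℂ
  | 0 => 1
  | j + 1 =>
      Polynomial.X * szego α j -
        Polynomial.C ((starRingEnd ℂ) (α j)) *
          Polynomial.reflect j ((szego α j).map (starRingEnd ℂ))

/-- The deformed Verblunsky coefficients `γ_k = 1 - Φ_{k+1}(1)/Φ_k(1)`. -/
def gammaCoeff (α : ℕ → ℂ) (k : ℕ) : ℂ :=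
  1 - (szego α (k + 1)).eval 1 / (szego α k).eval 1

namespace Polynomial

theorem eval_one_reflect {R : Type*} [CommSemiring R] {N : ℕ} {f : R[X]} (hf : f.natDegree ≤ N) :
    (reflect N f).eval 1 = f.eval 1 := by
  let : Invertible (1 : R) := invertibleOne
  have h := eval₂_reflect_mul_pow (RingHom.id R) 1 N f hf
  rwa [invOf_one, one_pow, mul_one] at h

end Polynomial

open Polynomial

theorem natDegree_szego_le (α : ℕ → ℂ) (j : ℕ) : (szego α j).natDegree ≤ j := by
  induction j with
  | zero => simp [szego]
  | succ j ih =>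
    have hX : (X * szego α j).natDegree ≤ j + 1 :=
      natDegree_mul_le.trans (by rw [natDegree_X]; omega)
    have hrefl : (reflect j ((szego α j).map (starRingEnd ℂ))).natDegree ≤ j :=
      natDegree_le_iff_coeff_eq_zero.mpr fun i hi => by
        rw [coeff_reflect, revAt_eq_self_of_lt hi]
        exact coeff_eq_zero_of_natDegree_lt (natDegree_map_le.trans ih |>.trans_lt hi)
    exact (natDegree_sub_le _ _).trans <| max_le hX <|
      natDegree_C_mul_le _ _ |>.trans (hrefl.trans j.le_succ)

theorem eval_one_szego_succ (α : ℕ → ℂ) (j : ℕ) :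
    (szego α (j + 1)).eval 1 = (szego α j).eval 1 - conj (α j) * conj ((szego α j).eval 1) := by
  have hreflect : (reflect j ((szego α j).map (starRingEnd ℂ))).eval 1 =
      conj ((szego α j).eval 1) := by
    rw [eval_one_reflect (natDegree_map_le.trans (natDegree_szego_le α j)), eval_one_map]
  simp [szego, hreflect]

theorem one_sub_gammaCoeff (α : ℕ → ℂ) (k : ℕ) :
    1 - gammaCoeff α k = (szego α (k + 1)).eval 1 / (szego α k).eval 1 :=
  sub_sub_cancel _ _

theorem gammaCoeff_eq (α : ℕ → ℂ) {k : ℕ} (hk : (szego α k).eval 1 ≠ 0) :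
    gammaCoeff α k = conj (α k) * (conj ((szego α k).eval 1) / (szego α k).eval 1) := by
  rw [gammaCoeff, eval_one_szego_succ]
  field_simp
  ring

theorem prod_conj_one_sub_gammaCoeff_div (α : ℕ → ℂ) {k : ℕ}
    (hΦ : ∀ j < k, (szego α j).eval 1 ≠ 0) :
    ∏ j ∈ range k, (1 - conj (gammaCoeff α j)) / (1 - gammaCoeff α j) =
      conj ((szego α k).eval 1) / (szego α k).eval 1 := by
  induction k with
  | zero => simp [szego]
  | succ k ih =>
    have hk : (szego α k).eval 1 ≠ 0 := hΦ k k.lt_succ_self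
    have hk' : conj ((szego α k).eval 1) ≠ 0 := (_root_.map_ne_zero _).mpr hk
    have hfactor : 1 - conj (gammaCoeff α k) = conj (1 - gammaCoeff α k) := by simp
    rw [prod_range_succ, ih fun j hj => hΦ j (hj.trans k.lt_succ_self), hfactor,
      one_sub_gammaCoeff, map_div₀]
    by_cases hk1 : (szego α (k + 1)).eval 1 = 0
    · simp [hk1]
    · field_simp

theorem gammaCoeff_recursion_general (n : ℕ) (α : ℕ → ℂ)
    (hΦ : ∀ j < n, (szego α j).eval 1 ≠ 0) :
    gammaCoeff α 0 = (starRingEnd ℂ) (α 0) ∧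
    ∀ k, 1 ≤ k → k ≤ n - 1 →
      gammaCoeff α k = (starRingEnd ℂ) (α k) *
        ∏ j ∈ Finset.range k,
          (1 - (starRingEnd ℂ) (gammaCoeff α j)) / (1 - gammaCoeff α j) := by
  refine ⟨by simp [gammaCoeff, szego], fun k hk1 hkn => ?_⟩
  have hk : k < n := by omega
  rw [prod_conj_one_sub_gammaCoeff_div α fun j hj => hΦ j (hj.trans hk)]
  exact gammaCoeff_eq α (hΦ k hk)

/-- **Proposition 2.5(b)**: the deformed Verblunsky coefficients
`γ_k = 1 - Φ_{k+1}(1)/Φ_k(1)` satisfy `γ₀ = conj α₀` and the recursion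
`γ_k = conj(α_k) ∏_{j<k} (1 - conj γ_j)/(1 - γ_j)`. -/
theorem gammaCoeff_recursion (n : ℕ) (hn : 1 ≤ n) (α : ℕ → ℂ)
    (h1 : ∀ k, k + 1 < n → ‖α k‖ < 1)
    (h2 : ‖α (n - 1)‖ = 1)
    (hΦ : ∀ j < n, (szego α j).eval 1 ≠ 0) :
    gammaCoeff α 0 = (starRingEnd ℂ) (α 0) ∧
    ∀ k, 1 ≤ k → k ≤ n - 1 →
      gammaCoeff α k = (starRingEnd ℂ) (α k) *
        ∏ j ∈ Finset.range k,
          (1 - (starRingEnd ℂ) (gammaCoeff α j)) / (1 - gammaCoeff α j) :=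
  gammaCoeff_recursion_general n α hΦ
end
end

section
/- Uniform bound on the partial sums of Dirichlet weights (key estimate in the proof of Theorem 5.2): For every β' > 0 there exists a constant C > 0 such that for every n ≥ 2, every ε > 0, and any random variables S_1,…,S_{n−1} defined on a common probability space with S_k distributed according to the Beta(β'k, β'(n−k)) law for each 1 ≤ k ≤ n−1, one has P(max_{1≤k≤n−1} |S_k − k/n| > ε) ≤ C/(ε⁴·n). (In the application, S_k = π_1+⋯+π_k where (π_1,…,π_n) is Dirichlet-distributed with all parameters β', in which case S_k ~ Beta(β'k, β'(n−k)).) -/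
open MeasureTheory Real
open scoped Real ENNReal

noncomputable section

/-- The Beta(a,b) distribution: the law on `[0,1]` with density
`Γ(a+b)/(Γ(a)Γ(b)) x^{a-1}(1-x)^{b-1}` with respect to Lebesgue measure. -/
def betaMeasure (a b : ℝ) : Measure ℝ :=
  volume.withDensity fun x =>
    ENNReal.ofReal (if x ∈ Set.Ioo (0 : ℝ) 1 then
      (Real.Gamma (a + b) / (Real.Gamma a * Real.Gamma b)) *
        x ^ (a - 1) * (1 - x) ^ (b - 1)
      else 0)

lemma cF_eq {a b : ℝ} (ha : 0 < a) (hb : 0 < b) {x : ℝ} (hx : x ∈ Set.Ioo (0:ℝ) 1) :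
    (x:ℂ) ^ ((a:ℂ)-1) * ((1:ℂ)-x) ^ ((b:ℂ)-1)
      = ((x ^ (a-1) * (1-x) ^ (b-1) : ℝ) : ℂ) := by
  have h1 : ((x ^ (a-1) : ℝ) : ℂ) = (x:ℂ) ^ ((a:ℂ)-1) := by
    rw [Complex.ofReal_cpow hx.1.le]; push_cast; ring_nf
  have h2 : (((1-x) ^ (b-1) : ℝ) : ℂ) = ((1:ℂ)-x) ^ ((b:ℂ)-1) := by
    rw [Complex.ofReal_cpow (by linarith [hx.2] : (0:ℝ) ≤ 1 - x)]; push_cast; ring_nf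
  rw [Complex.ofReal_mul, h1, h2]

lemma beta_integrableOn {a b : ℝ} (ha : 0 < a) (hb : 0 < b) :
    IntegrableOn (fun x : ℝ => x ^ (a-1) * (1-x) ^ (b-1)) (Set.Ioo 0 1) := by
  have hc : IntervalIntegrable (fun x : ℝ => (x:ℂ) ^ ((a:ℂ)-1) * ((1:ℂ)-x) ^ ((b:ℂ)-1))
      volume 0 1 := Complex.betaIntegral_convergent (by simpa using ha) (by simpa using hb)
  have h1 : IntegrableOn (fun x : ℝ => (x:ℂ) ^ ((a:ℂ)-1) * ((1:ℂ)-x) ^ ((b:ℂ)-1))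
      (Set.Ioo 0 1) := ((intervalIntegrable_iff_integrableOn_Ioc_of_le zero_le_one).mp hc).mono_set
      Set.Ioo_subset_Ioc_self
  have := h1.re
  refine (IntegrableOn.congr_fun this ?_ measurableSet_Ioo)
  intro x hx
  simp [cF_eq ha hb hx]

lemma beta_integral_Ioo {a b : ℝ} (ha : 0 < a) (hb : 0 < b) :
    ∫ x in Set.Ioo (0:ℝ) 1, x ^ (a-1) * (1-x) ^ (b-1)
      = Real.Gamma a * Real.Gamma b / Real.Gamma (a+b) := by
  have hc : IntervalIntegrable (fun x : ℝ => (x:ℂ) ^ ((a:ℂ)-1) * ((1:ℂ)-x) ^ ((b:ℂ)-1))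
      volume 0 1 := Complex.betaIntegral_convergent (by simpa using ha) (by simpa using hb)
  have h1 : IntegrableOn (fun x : ℝ => (x:ℂ) ^ ((a:ℂ)-1) * ((1:ℂ)-x) ^ ((b:ℂ)-1))
      (Set.Ioo 0 1) := ((intervalIntegrable_iff_integrableOn_Ioc_of_le zero_le_one).mp hc).mono_set
      Set.Ioo_subset_Ioc_self
  have h2 : ∫ x in Set.Ioo (0:ℝ) 1, x ^ (a-1) * (1-x) ^ (b-1)
      = (∫ x in Set.Ioo (0:ℝ) 1, (x:ℂ) ^ ((a:ℂ)-1) * ((1:ℂ)-x) ^ ((b:ℂ)-1)).re := by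
    have t := integral_re (μ := volume.restrict (Set.Ioo 0 1)) h1
    simp only [RCLike.re_to_complex] at t
    rw [← t]
    refine setIntegral_congr_fun measurableSet_Ioo fun x hx => ?_
    rw [cF_eq ha hb hx, Complex.ofReal_re]
  have h3 : ∫ x in Set.Ioo (0:ℝ) 1, (x:ℂ) ^ ((a:ℂ)-1) * ((1:ℂ)-x) ^ ((b:ℂ)-1)
      = Complex.betaIntegral a b := by
    rw [Complex.betaIntegral, intervalIntegral.integral_of_le zero_le_one,
      ← integral_Ioc_eq_integral_Ioo]
  have hβ : Complex.betaIntegral a b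
      = ((Real.Gamma a * Real.Gamma b / Real.Gamma (a+b) : ℝ) : ℂ) := by
    have h := Complex.Gamma_mul_Gamma_eq_betaIntegral
      (s := (a:ℂ)) (t := (b:ℂ)) (by simpa using ha) (by simpa using hb)
    have hab : ((a:ℂ) + b) = ((a+b : ℝ) : ℂ) := by push_cast; ring
    rw [hab, Complex.Gamma_ofReal, Complex.Gamma_ofReal, Complex.Gamma_ofReal] at h
    have hne : ((Real.Gamma (a+b) : ℂ)) ≠ 0 := by
      simpa using (Real.Gamma_pos_of_pos (by linarith)).ne'
    push_cast
    rw [eq_div_iff hne]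
    linear_combination -h
  rw [h2, h3, hβ, Complex.ofReal_re]

lemma betaMeasure_lintegral (a b : ℝ) (g : ℝ → ℝ) (hg : Measurable g)
    (hg0 : ∀ x, 0 ≤ g x)
    (hab : 0 ≤ Real.Gamma (a + b) / (Real.Gamma a * Real.Gamma b))
    (hint : IntegrableOn (fun x => (Real.Gamma (a + b) / (Real.Gamma a * Real.Gamma b)) *
        x ^ (a - 1) * (1 - x) ^ (b - 1) * g x) (Set.Ioo 0 1)) :
    ∫⁻ x, ENNReal.ofReal (g x) ∂(betaMeasure a b)
      = ENNReal.ofReal (∫ x in Set.Ioo (0:ℝ) 1,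
          (Real.Gamma (a + b) / (Real.Gamma a * Real.Gamma b)) *
            x ^ (a - 1) * (1 - x) ^ (b - 1) * g x) := by
  rw [betaMeasure]
  set c := Real.Gamma (a + b) / (Real.Gamma a * Real.Gamma b) with hc
  have hd : Measurable (fun x : ℝ => ENNReal.ofReal (if x ∈ Set.Ioo (0 : ℝ) 1 then
      c * x ^ (a - 1) * (1 - x) ^ (b - 1) else 0)) := by
    apply ENNReal.measurable_ofReal.comp
    apply Measurable.ite measurableSet_Ioo _ measurable_const
    fun_prop
  have hg' : Measurable fun x => ENNReal.ofReal (g x) := ENNReal.measurable_ofReal.comp hg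
  rw [lintegral_withDensity_eq_lintegral_mul _ hd hg']
  have key : ∀ x : ℝ, (ENNReal.ofReal (if x ∈ Set.Ioo (0 : ℝ) 1 then
        c * x ^ (a - 1) * (1 - x) ^ (b - 1) else 0) * ENNReal.ofReal (g x))
      = Set.indicator (Set.Ioo (0:ℝ) 1)
          (fun x => ENNReal.ofReal (c * x ^ (a - 1) * (1 - x) ^ (b - 1) * g x)) x := by
    intro x
    by_cases hx : x ∈ Set.Ioo (0:ℝ) 1
    · rw [Set.indicator_of_mem hx, if_pos hx, ← ENNReal.ofReal_mul]
      rcases hx with ⟨hx1, hx2⟩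
      have : (0:ℝ) ≤ x ^ (a-1) := Real.rpow_nonneg hx1.le _
      have : (0:ℝ) ≤ (1-x) ^ (b-1) := Real.rpow_nonneg (by linarith) _
      positivity
    · rw [Set.indicator_of_notMem hx, if_neg hx]
      simp
  simp only [Pi.mul_apply, key]
  rw [lintegral_indicator measurableSet_Ioo _]
  have hnn : 0 ≤ᶠ[ae (volume.restrict (Set.Ioo (0:ℝ) 1))]
      fun x => c * x ^ (a - 1) * (1 - x) ^ (b - 1) * g x := by
    filter_upwards [ae_restrict_mem measurableSet_Ioo] with x hx
    rcases hx with ⟨hx1, hx2⟩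
    have h1 : (0:ℝ) ≤ x ^ (a-1) := Real.rpow_nonneg hx1.le _
    have h2 : (0:ℝ) ≤ (1-x) ^ (b-1) := Real.rpow_nonneg (by linarith) _
    have := hg0 x
    positivity
  rw [← ofReal_integral_eq_lintegral_ofReal hint hnn]

lemma frac_ineq (a b : ℝ) (ha : 0 < a) (hb : 0 < b) :
    3*(a*b)*((a*b)*((a+b)-6)+2*(a+b)^2) / ((a+b)^4*((a+b)+1)*((a+b)+2)*((a+b)+3))
      ≤ 3/(a+b)^2 := by
  have hm : 0 < a + b := by linarith
  rw [div_le_div_iff₀ (by positivity) (by positivity)]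
  nlinarith [mul_nonneg (pow_pos hm 5).le (sq_nonneg (a-b)),
    mul_nonneg (mul_pos (mul_pos ha hb) (pow_pos hm 3)).le (sq_nonneg (a-b)),
    mul_nonneg (mul_pos (mul_pos ha hb) (mul_pos ha hb)).le (sq_nonneg (a+b)),
    mul_nonneg (pow_pos hm 4).le (sq_nonneg (a-b)),
    (pow_pos hm 7), (pow_pos hm 6), (pow_pos hm 5), (pow_pos hm 4)]
lemma beta_moment (a b : ℝ) (ha : 0 < a) (hb : 0 < b) (j : ℕ) :
    IntegrableOn (fun x : ℝ => x ^ j * (x ^ (a-1) * (1-x) ^ (b-1))) (Set.Ioo 0 1) ∧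
    ∫ x in Set.Ioo (0:ℝ) 1, x ^ j * (x ^ (a-1) * (1-x) ^ (b-1))
      = Real.Gamma (a+j) * Real.Gamma b / Real.Gamma ((a+b)+j) := by
  have haj : 0 < a + (j:ℝ) := by positivity
  have heq : ∀ x ∈ Set.Ioo (0:ℝ) 1,
      x ^ ((a+(j:ℝ))-1) * (1-x) ^ (b-1) = x ^ j * (x ^ (a-1) * (1-x) ^ (b-1)) := by
    intro x hx
    rw [show (a+(j:ℝ))-1 = (j:ℝ) + (a-1) by ring, Real.rpow_add hx.1, Real.rpow_natCast]
    ring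
  constructor
  · exact (beta_integrableOn haj hb).congr_fun heq measurableSet_Ioo
  · rw [← setIntegral_congr_fun measurableSet_Ioo heq, beta_integral_Ioo haj hb,
      show a + (j:ℝ) + b = (a+b) + j by ring]

lemma beta_cmom (a b : ℝ) (ha : 0 < a) (hb : 0 < b) :
    ∫⁻ x, ENNReal.ofReal ((x - a/(a+b))^4) ∂(betaMeasure a b)
      ≤ ENNReal.ofReal (3/(a+b)^2) := by
  have hm : 0 < a + b := by linarith
  have hΓa := Real.Gamma_pos_of_pos ha
  have hΓb := Real.Gamma_pos_of_pos hb
  have hΓm := Real.Gamma_pos_of_pos hm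
  set c := Real.Gamma (a + b) / (Real.Gamma a * Real.Gamma b) with hcdef
  have hc : 0 < c := by positivity
  set μ := a/(a+b) with hμdef
  set B := fun x : ℝ => x ^ (a-1) * (1-x) ^ (b-1) with hB
  obtain ⟨I0, J0⟩ := beta_moment a b ha hb 0
  obtain ⟨I1, J1⟩ := beta_moment a b ha hb 1
  obtain ⟨I2, J2⟩ := beta_moment a b ha hb 2
  obtain ⟨I3, J3⟩ := beta_moment a b ha hb 3
  obtain ⟨I4, J4⟩ := beta_moment a b ha hb 4
  have e : (fun x : ℝ => c * x ^ (a-1) * (1-x) ^ (b-1) * (x - μ)^4)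
      = fun x => c*(x^(4:ℕ) * B x) - 4*μ*c*(x^(3:ℕ) * B x) + 6*μ^2*c*(x^(2:ℕ) * B x)
          - 4*μ^3*c*(x^(1:ℕ) * B x) + μ^4*c*(x^(0:ℕ) * B x) := by
    funext x; simp only [hB]; ring
  have hint : IntegrableOn (fun x : ℝ => c * x ^ (a-1) * (1-x) ^ (b-1) * (x - μ)^4)
      (Set.Ioo 0 1) := by
    rw [e]
    exact ((((I4.const_mul _).sub (I3.const_mul _)).add (I2.const_mul _)).sub
      (I1.const_mul _)).add (I0.const_mul _)
  have hval : ∫ x in Set.Ioo (0:ℝ) 1, c * x ^ (a-1) * (1-x) ^ (b-1) * (x - μ)^4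
      = c * (Real.Gamma (a+4) * Real.Gamma b / Real.Gamma ((a+b)+4))
        - 4*μ*c * (Real.Gamma (a+3) * Real.Gamma b / Real.Gamma ((a+b)+3))
        + 6*μ^2*c * (Real.Gamma (a+2) * Real.Gamma b / Real.Gamma ((a+b)+2))
        - 4*μ^3*c * (Real.Gamma (a+1) * Real.Gamma b / Real.Gamma ((a+b)+1))
        + μ^4*c * (Real.Gamma (a+0) * Real.Gamma b / Real.Gamma ((a+b)+0)) := by
    rw [e]
    rw [integral_add, integral_sub, integral_add, integral_sub]
    · rw [integral_const_mul, integral_const_mul, integral_const_mul, integral_const_mul,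
        integral_const_mul, J0, J1, J2, J3, J4]
      push_cast
      ring
    · exact (I4.const_mul _)
    · exact (I3.const_mul _)
    · exact ((I4.const_mul _).sub (I3.const_mul _))
    · exact (I2.const_mul _)
    · exact (((I4.const_mul _).sub (I3.const_mul _)).add (I2.const_mul _))
    · exact (I1.const_mul _)
    · exact ((((I4.const_mul _).sub (I3.const_mul _)).add (I2.const_mul _)).sub
        (I1.const_mul _))
    · exact (I0.const_mul _)
  have hrw := betaMeasure_lintegral a b (fun x => (x - μ)^4)
    (by fun_prop) (fun x => by positivity) hc.le (by exact hint)
  rw [hrw, hval]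
  apply ENNReal.ofReal_le_ofReal
  -- Gamma recurrences
  have g1 : Real.Gamma (a+1) = a * Real.Gamma a := Real.Gamma_add_one ha.ne'
  have g2 : Real.Gamma (a+2) = (a+1) * (a * Real.Gamma a) := by
    rw [show a+2 = (a+1)+1 by ring, Real.Gamma_add_one (by linarith), g1]
  have g3 : Real.Gamma (a+3) = (a+2) * ((a+1) * (a * Real.Gamma a)) := by
    rw [show a+3 = (a+2)+1 by ring, Real.Gamma_add_one (by linarith), g2]
  have g4 : Real.Gamma (a+4) = (a+3) * ((a+2) * ((a+1) * (a * Real.Gamma a))) := by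
    rw [show a+4 = (a+3)+1 by ring, Real.Gamma_add_one (by linarith), g3]
  have m1 : Real.Gamma ((a+b)+1) = (a+b) * Real.Gamma (a+b) := Real.Gamma_add_one hm.ne'
  have m2 : Real.Gamma ((a+b)+2) = ((a+b)+1) * ((a+b) * Real.Gamma (a+b)) := by
    rw [show (a+b)+2 = ((a+b)+1)+1 by ring, Real.Gamma_add_one (by linarith), m1]
  have m3 : Real.Gamma ((a+b)+3) = ((a+b)+2) * (((a+b)+1) * ((a+b) * Real.Gamma (a+b))) := by
    rw [show (a+b)+3 = ((a+b)+2)+1 by ring, Real.Gamma_add_one (by linarith), m2]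
  have m4 : Real.Gamma ((a+b)+4)
      = ((a+b)+3) * (((a+b)+2) * (((a+b)+1) * ((a+b) * Real.Gamma (a+b)))) := by
    rw [show (a+b)+4 = ((a+b)+3)+1 by ring, Real.Gamma_add_one (by linarith), m3]
  have hexp : c * (Real.Gamma (a+4) * Real.Gamma b / Real.Gamma ((a+b)+4))
        - 4*μ*c * (Real.Gamma (a+3) * Real.Gamma b / Real.Gamma ((a+b)+3))
        + 6*μ^2*c * (Real.Gamma (a+2) * Real.Gamma b / Real.Gamma ((a+b)+2))
        - 4*μ^3*c * (Real.Gamma (a+1) * Real.Gamma b / Real.Gamma ((a+b)+1))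
        + μ^4*c * (Real.Gamma (a+0) * Real.Gamma b / Real.Gamma ((a+b)+0))
      = 3*(a*b)*((a*b)*((a+b)-6)+2*(a+b)^2)
          / ((a+b)^4*((a+b)+1)*((a+b)+2)*((a+b)+3)) := by
    rw [g1, g2, g3, g4, m1, m2, m3, m4, hcdef, hμdef, add_zero, add_zero]
    have h1 : (a+b)+1 ≠ 0 := by positivity
    have h2 : (a+b)+2 ≠ 0 := by positivity
    have h3 : (a+b)+3 ≠ 0 := by positivity
    field_simp
    ring
  rw [hexp]
  exact frac_ineq a b ha hb
lemma betaMeasure_univ (a b : ℝ) (ha : 0 < a) (hb : 0 < b) :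
    betaMeasure a b Set.univ = 1 := by
  have hm : 0 < a + b := by linarith
  have hΓa := Real.Gamma_pos_of_pos ha
  have hΓb := Real.Gamma_pos_of_pos hb
  have hΓm := Real.Gamma_pos_of_pos hm
  set c := Real.Gamma (a + b) / (Real.Gamma a * Real.Gamma b) with hcdef
  have hc : 0 < c := by positivity
  have hint : IntegrableOn (fun x : ℝ => c * x ^ (a-1) * (1-x) ^ (b-1) * 1)
      (Set.Ioo 0 1) := by
    simp only [mul_one]
    have h2 : IntegrableOn (fun x : ℝ => c * (x ^ (a-1) * (1-x) ^ (b-1)))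
        (Set.Ioo 0 1) := (beta_integrableOn ha hb).const_mul c
    refine h2.congr_fun (fun x _ => by ring) measurableSet_Ioo
  have h := betaMeasure_lintegral a b (fun _ => 1) measurable_const
    (fun _ => zero_le_one) hc.le hint
  simp only [mul_one] at h
  have hI : ∫ x in Set.Ioo (0:ℝ) 1, c * x ^ (a-1) * (1-x) ^ (b-1)
      = c * (Real.Gamma a * Real.Gamma b / Real.Gamma (a+b)) := by
    rw [← beta_integral_Ioo ha hb, ← integral_const_mul]
    exact setIntegral_congr_fun measurableSet_Ioo (fun x _ => by ring)
  rw [hI, hcdef] at h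
  have : Real.Gamma (a + b) / (Real.Gamma a * Real.Gamma b)
      * (Real.Gamma a * Real.Gamma b / Real.Gamma (a+b)) = 1 := by
    field_simp
  rw [this] at h
  simpa using h


/-- Uniform bound on the partial sums of Dirichlet weights (key estimate in
the proof of Theorem 5.2): for every `β' > 0` there is `C > 0` such that for
all `n ≥ 2`, `ε > 0` and random variables `S_1,…,S_{n-1}` (on any common
probability space, with no joint independence assumption) such that `S_k` is
`Beta(β'k, β'(n-k))`-distributed,
`P(max_{1≤k≤n-1} |S_k - k/n| > ε) ≤ C/(ε⁴ n)`. -/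
theorem dirichlet_partial_sums_uniform_bound (β' : ℝ) (hβ' : 0 < β') :
    ∃ C : ℝ, 0 < C ∧
      ∀ (n : ℕ), 2 ≤ n → ∀ ε : ℝ, 0 < ε →
      ∀ (Ω : Type) (_ : MeasurableSpace Ω) (P : Measure Ω),
        IsProbabilityMeasure P →
      ∀ S : ℕ → Ω → ℝ,
        (∀ k, 1 ≤ k → k ≤ n - 1 →
          Measure.map (S k) P = betaMeasure (β' * k) (β' * ((n : ℝ) - k))) →
        P {ω | ∃ k, 1 ≤ k ∧ k ≤ n - 1 ∧ ε < |S k ω - (k : ℝ) / n|} ≤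
          ENNReal.ofReal (C / (ε ^ 4 * n)) := by
  refine ⟨3 / β' ^ 2, by positivity, ?_⟩
  intro n hn ε hε Ω mΩ P hP S hS
  have hn0 : (0:ℝ) < n := by positivity
  -- union bound
  have hsub : {ω | ∃ k, 1 ≤ k ∧ k ≤ n - 1 ∧ ε < |S k ω - (k : ℝ) / n|}
      ⊆ ⋃ k ∈ Finset.Icc 1 (n-1), {ω | ε < |S k ω - (k : ℝ) / n|} := by
    rintro ω ⟨k, h1, h2, h3⟩
    exact Set.mem_biUnion (Finset.mem_Icc.mpr ⟨h1, h2⟩) h3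
  refine le_trans (measure_mono hsub) ?_
  refine le_trans (measure_biUnion_finset_le _ _) ?_
  have hbound : ∀ k ∈ Finset.Icc 1 (n-1),
      P {ω | ε < |S k ω - (k : ℝ) / n|}
        ≤ ENNReal.ofReal (3 / (β' ^ 2 * n ^ 2 * ε ^ 4)) := by
    intro k hk
    rw [Finset.mem_Icc] at hk
    obtain ⟨hk1, hk2⟩ := hk
    have hkn : k < n := by omega
    have hkr : (k:ℝ) < n := by exact_mod_cast hkn
    have hk0 : (0:ℝ) < k := by exact_mod_cast hk1
    set a := β' * k with hadef
    set b := β' * ((n:ℝ) - k) with hbdef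
    have ha : 0 < a := by positivity
    have hb : 0 < b := by
      apply mul_pos hβ'; linarith
    have hmap := hS k hk1 hk2
    have hSm : AEMeasurable (S k) P := by
      by_contra h
      rw [Measure.map_of_not_aemeasurable h] at hmap
      have := betaMeasure_univ a b ha hb
      rw [← hmap] at this
      simp at this
    have hab : a + b = β' * n := by rw [hadef, hbdef]; ring
    have hμ : (k:ℝ) / n = a / (a + b) := by
      rw [hab, hadef]
      rw [mul_div_mul_left _ _ hβ'.ne']
    have hAE : AEMeasurable (fun ω => ENNReal.ofReal ((S k ω - (k:ℝ)/n)^4)) P := by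
      exact (ENNReal.measurable_ofReal.comp
        (((measurable_id.sub measurable_const).pow_const 4))).comp_aemeasurable
        ((hSm))
    have hss : {ω | ε < |S k ω - (k : ℝ) / n|}
        ⊆ {ω | ENNReal.ofReal (ε^4) ≤ (fun ω => ENNReal.ofReal ((S k ω - (k:ℝ)/n)^4)) ω} := by
      intro ω hω
      simp only [Set.mem_setOf_eq] at hω ⊢
      apply ENNReal.ofReal_le_ofReal
      calc ε^4 ≤ |S k ω - (k:ℝ)/n|^4 := by
            exact pow_le_pow_left₀ hε.le hω.le 4
        _ = (S k ω - (k:ℝ)/n)^4 := by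
            rw [← abs_pow, abs_of_nonneg (by positivity)]
    refine le_trans (measure_mono hss) ?_
    refine le_trans (meas_ge_le_lintegral_div hAE (by simp [hε, pow_pos])
      (by simp)) ?_
    have hmap' : ∫⁻ ω, ENNReal.ofReal ((S k ω - (k:ℝ)/n)^4) ∂P
        = ∫⁻ x, ENNReal.ofReal ((x - (k:ℝ)/n)^4) ∂(betaMeasure a b) := by
      rw [← hmap, lintegral_map' _ hSm]
      exact (ENNReal.measurable_ofReal.comp
        (((measurable_id.sub measurable_const).pow_const 4))).aemeasurable
    rw [hmap', hμ]
    refine le_trans (ENNReal.div_le_div_right (beta_cmom a b ha hb) _) ?_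
    rw [← ENNReal.ofReal_div_of_pos (by positivity)]
    apply ENNReal.ofReal_le_ofReal
    rw [hab]
    rw [div_div]
    apply div_le_div_of_nonneg_left (by norm_num) (by positivity)
    apply le_of_eq; ring
  refine le_trans (Finset.sum_le_sum hbound) ?_
  rw [Finset.sum_const, Nat.card_Icc]
  have hcard : (n - 1 + 1 - 1) = n - 1 := by omega
  rw [hcard, nsmul_eq_mul]
  have hcast : ((n-1 : ℕ) : ℝ≥0∞) = ENNReal.ofReal ((n-1:ℕ):ℝ) := by
    simp [ENNReal.ofReal_natCast]
  rw [hcast, ← ENNReal.ofReal_mul (by positivity)]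
  apply ENNReal.ofReal_le_ofReal
  have hle : ((n-1:ℕ):ℝ) ≤ n := by
    have : (n-1:ℕ) ≤ n := by omega
    exact_mod_cast this
  have h1 : ((n-1:ℕ):ℝ) * (3 / (β' ^ 2 * n ^ 2 * ε ^ 4))
      ≤ n * (3 / (β' ^ 2 * n ^ 2 * ε ^ 4)) := by
    apply mul_le_mul_of_nonneg_right hle (by positivity)
  refine h1.trans ?_
  apply le_of_eq
  field_simp
end
end
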